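/- Let V = (F_2)^n and let ρ be a permutation of V. Suppose there exist non-trivial proper subspaces U₁, U₂ of V such that ρ maps the linear partition 𝓛(U₁) onto 𝓛(U₂), i.e., for each v ∈ V there exists w ∈ V with (U₁ + v)ρ = U₂ + w. Let 𝒰₁ = U₂ × U₁ and 𝒰₂ = U₁ × U₂ as subgroups of V × V, and let ρ̄ be the Feistel operator induced by ρ. Then for every (v, v′) ∈ V × V, (𝒰₁ + (v, v′))ρ̄ = 𝒰₂ + (v′, v + v′ρ); in particular ρ̄ maps the linear partition 𝓛(𝒰₁) of V × V onto 𝓛(𝒰₂). -/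
import Mathlib


abbrev Vn (n : ℕ) := Fin n → ZMod 2

/-- The Feistel operator `(x₁, x₂) ↦ (x₂, x₁ + ρ x₂)` on `V × V`. -/
def feistel {n : ℕ} (ρ : Equiv.Perm (Vn n)) : Vn n × Vn n → Vn n × Vn n :=
  fun x => (x.2, x.1 + ρ x.2)

/-- The coset `S + v` of a subset `S` of an additive group. -/
def coset {α : Type*} [Add α] (S : Set α) (v : α) : Set α :=
  (fun x => x + v) '' S

lemma Vn.add_self {n : ℕ} (x : Vn n) : x + x = 0 := by
  ext i; exact CharTwo.add_self_eq_zero (x i)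

lemma mem_coset {n : ℕ} (U : Submodule (ZMod 2) (Vn n)) (v x : Vn n) :
    x ∈ coset (U : Set (Vn n)) v ↔ x + v ∈ U := by
  constructor
  · rintro ⟨u, hu, rfl⟩
    simpa [add_assoc, Vn.add_self] using hu
  · intro hx
    exact ⟨x + v, hx, by simp [add_assoc, Vn.add_self]⟩

lemma mem_coset_prod {n : ℕ} (U₂ U₁ : Submodule (ZMod 2) (Vn n)) (v v' a b : Vn n) :
    (a, b) ∈ coset ((U₂ : Set (Vn n)) ×ˢ (U₁ : Set (Vn n))) (v, v') ↔
      a + v ∈ U₂ ∧ b + v' ∈ U₁ := by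
  constructor
  · rintro ⟨⟨p, q⟩, ⟨hp, hq⟩, heq⟩
    have h1 : p + v = a := congrArg Prod.fst heq
    have h2 : q + v' = b := congrArg Prod.snd heq
    subst h1; subst h2
    constructor
    · simpa [add_assoc, Vn.add_self] using hp
    · simpa [add_assoc, Vn.add_self] using hq
  · rintro ⟨ha, hb⟩
    exact ⟨(a + v, b + v'), ⟨ha, hb⟩, by
      simp [Prod.ext_iff, add_assoc, Vn.add_self]⟩

/-- If `ρ` maps the linear partition `𝓛(U₁)` onto `𝓛(U₂)`, then the Feistel
operator maps `𝓛(U₂ × U₁)` onto `𝓛(U₁ × U₂)`; explicitly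
`(𝒰₁ + (v, v'))ρ̄ = 𝒰₂ + (v', v + v'ρ)` for all `(v, v')`. -/
theorem stmt_12 (n : ℕ) (ρ : Equiv.Perm (Vn n))
    (U₁ U₂ : Submodule (ZMod 2) (Vn n))
    (hU₁ : U₁ ≠ ⊥) (hU₁' : U₁ ≠ ⊤) (hU₂ : U₂ ≠ ⊥) (hU₂' : U₂ ≠ ⊤)
    (h : ∀ v : Vn n, ∃ w : Vn n,
      (fun x => ρ x) '' coset (U₁ : Set (Vn n)) v = coset (U₂ : Set (Vn n)) w) :
    (∀ v v' : Vn n,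
      feistel ρ '' coset ((U₂ : Set (Vn n)) ×ˢ (U₁ : Set (Vn n))) (v, v') =
        coset ((U₁ : Set (Vn n)) ×ˢ (U₂ : Set (Vn n))) (v', v + ρ v')) ∧
    (fun S => feistel ρ '' S) ''
        (Set.range (coset ((U₂ : Set (Vn n)) ×ˢ (U₁ : Set (Vn n))))) =
      Set.range (coset ((U₁ : Set (Vn n)) ×ˢ (U₂ : Set (Vn n)))) := by
  -- key: if a + v' ∈ U₁ then ρ a + ρ v' ∈ U₂
  have key : ∀ v' a : Vn n, a + v' ∈ U₁ → ρ a + ρ v' ∈ U₂ := by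
    intro v' a ha
    obtain ⟨w, hw⟩ := h v'
    have hmem : ∀ x : Vn n, x + v' ∈ U₁ → ρ x ∈ coset (U₂ : Set (Vn n)) w := by
      intro x hx
      rw [← hw]
      exact ⟨x, (mem_coset U₁ v' x).2 hx, rfl⟩
    have h1 := (mem_coset U₂ w (ρ a)).1 (hmem a ha)
    have h2 := (mem_coset U₂ w (ρ v')).1 (hmem v' (by simp [Vn.add_self]))
    have := U₂.add_mem h1 h2
    have heq : ρ a + w + (ρ v' + w) = ρ a + ρ v' := by
      rw [show ρ a + w + (ρ v' + w) = ρ a + ρ v' + (w + w) by ring, Vn.add_self]; simp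
    rwa [heq] at this
  have part1 : ∀ v v' : Vn n,
      feistel ρ '' coset ((U₂ : Set (Vn n)) ×ˢ (U₁ : Set (Vn n))) (v, v') =
        coset ((U₁ : Set (Vn n)) ×ˢ (U₂ : Set (Vn n))) (v', v + ρ v') := by
    intro v v'
    ext ⟨a, b⟩
    have himg : (a, b) ∈ feistel ρ '' coset ((U₂ : Set (Vn n)) ×ˢ (U₁ : Set (Vn n))) (v, v')
        ↔ (b + ρ a, a) ∈ coset ((U₂ : Set (Vn n)) ×ˢ (U₁ : Set (Vn n))) (v, v') := by
      constructor
      · rintro ⟨⟨x₁, x₂⟩, hx, heq⟩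
        have h1 : x₂ = a := congrArg Prod.fst heq
        have h2 : x₁ + ρ x₂ = b := congrArg Prod.snd heq
        have h3 : b + ρ a = x₁ := by
          rw [← h1, ← h2, add_assoc, Vn.add_self, add_zero]
        rw [h3, ← h1]
        exact hx
      · intro hx
        exact ⟨(b + ρ a, a), hx, by
          simp [feistel, Prod.ext_iff, add_assoc, Vn.add_self]⟩
    rw [himg, mem_coset_prod, mem_coset_prod]
    constructor
    · rintro ⟨h1, h2⟩
      refine ⟨h2, ?_⟩
      have hk := key v' a h2
      have := U₂.add_mem h1 hk
      have heq : b + ρ a + v + (ρ a + ρ v') = b + (v + ρ v') := by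
        rw [show b + ρ a + v + (ρ a + ρ v') = b + (v + ρ v') + (ρ a + ρ a) by ring,
          Vn.add_self]; simp
      rwa [heq] at this
    · rintro ⟨h2, h1⟩
      refine ⟨?_, h2⟩
      have hk := key v' a h2
      have := U₂.add_mem h1 hk
      have heq : b + (v + ρ v') + (ρ a + ρ v') = b + ρ a + v := by
        rw [show b + (v + ρ v') + (ρ a + ρ v') = b + ρ a + v + (ρ v' + ρ v') by ring,
          Vn.add_self]; simp
      rwa [heq] at this
  refine ⟨part1, ?_⟩
  ext S
  constructor
  · rintro ⟨T, ⟨⟨v, v'⟩, rfl⟩, rfl⟩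
    exact ⟨(v', v + ρ v'), (part1 v v').symm⟩
  · rintro ⟨⟨a, b⟩, rfl⟩
    refine ⟨coset ((U₂ : Set (Vn n)) ×ˢ (U₁ : Set (Vn n))) (b + ρ a, a),
      ⟨(b + ρ a, a), rfl⟩, ?_⟩
    show feistel ρ '' coset ((U₂ : Set (Vn n)) ×ˢ (U₁ : Set (Vn n))) (b + ρ a, a) =
      coset ((U₁ : Set (Vn n)) ×ˢ (U₂ : Set (Vn n))) (a, b)
    rw [part1 (b + ρ a) a, add_assoc, Vn.add_self, add_zero]
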